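/- Let $(\mathcal{A}, \phi)$ be a $*$-noncommutative probability space with $\phi$ a faithful tracial state on a C*-algebra, $p$ a projection of trace $t \in (0,1]$ free from the self-adjoint abelian subalgebra $\mathcal{R} \cong \mathbb{R}^k$ on which $\phi((x_1,\ldots,x_k)) = (x_1 + \cdots + x_k)/k$. Then the map $x \mapsto \|pxp\|$ is a norm on $\mathbb{R}^k$: it is homogeneous, satisfies the triangle inequality, and $\|pxp\| = 0$ implies $x = 0$. -/

import Mathlib

/-- Freeness of two unital subalgebras `S`, `T` with respect to a state `φ`:
any alternating product of centered elements has vanishing `φ`. -/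
def IsFreePair {A : Type*} [Ring A] [Algebra ℂ A] (φ : A → ℂ)
    (S T : Subalgebra ℂ A) : Prop :=
  ∀ (n : ℕ) (a : Fin n → A) (ι : Fin n → Bool),
    (∀ i, a i ∈ (if ι i then S else T)) →
    (∀ i, φ (a i) = 0) →
    (∀ (i : Fin n) (h : i.val + 1 < n), ι i ≠ ι ⟨i.val + 1, h⟩) →
    n ≠ 0 → φ (List.ofFn a).prod = 0

/-- The data defining the `(t)`-norm: a C*-probability space `(A, φ)` with `φ` a
faithful tracial state, a copy of `ℝ^k` embedded as the span of `k` pairwise orthogonal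
self-adjoint projections `q i`, each of trace `1/k`, summing to `1` (so that
`φ((x₁,…,x_k)) = (x₁+⋯+x_k)/k`), and a projection `p` of trace `t`, free from this
copy of `ℝ^k`. -/
structure TNormSetup (A : Type*) [NormedRing A] [StarRing A] [CStarRing A]
    [NormedAlgebra ℂ A] (k : ℕ) (t : ℝ) where
  φ : A →ₗ[ℂ] ℂ
  tracial : ∀ a b : A, φ (a * b) = φ (b * a)
  unital : φ 1 = 1
  pos : ∀ a : A, 0 ≤ (φ (star a * a)).re ∧ (φ (star a * a)).im = 0
  faithful : ∀ a : A, φ (star a * a) = 0 → a = 0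
  q : Fin k → A
  q_sa : ∀ i, star (q i) = q i
  q_proj : ∀ i, q i * q i = q i
  q_orth : ∀ i j, i ≠ j → q i * q j = 0
  q_sum : ∑ i, q i = 1
  q_trace : ∀ i, φ (q i) = (1 : ℂ) / (k : ℂ)
  p : A
  p_sa : star p = p
  p_proj : p * p = p
  p_trace : φ p = (t : ℂ)
  free : IsFreePair (⇑φ) (Algebra.adjoin ℂ {p}) (Algebra.adjoin ℂ (Set.range q))

/-- The embedding of `x ∈ ℝ^k` as a self-adjoint element of `A`. -/
noncomputable def TNormSetup.emb {A : Type*} [NormedRing A] [StarRing A] [CStarRing A]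
    [NormedAlgebra ℂ A] {k : ℕ} {t : ℝ} (S : TNormSetup A k t) (x : Fin k → ℝ) : A :=
  ∑ i, (x i : ℂ) • S.q i

/-- The `(t)`-norm: `‖x‖_{(t)} = ‖p x p‖` (operator norm). -/
noncomputable def tnorm {A : Type*} [NormedRing A] [StarRing A] [CStarRing A]
    [NormedAlgebra ℂ A] {k : ℕ} {t : ℝ} (S : TNormSetup A k t) (x : Fin k → ℝ) : ℝ :=
  ‖S.p * S.emb x * S.p‖

/-! Homogeneity and the triangle inequality are inherited from the C*-norm. For definiteness,
`pxp = 0` forces `φ(xpxp) = 0`, while freeness of `x` and `p` gives the moment formula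
`φ(xpxp) = t² φ(x²) + t(1 - t) φ(x)²`; both terms are nonnegative for `t ∈ (0, 1]`, and
`φ(x²) = (x₁² + ⋯ + x_k²)/k`. -/

namespace IsFreePair

variable {A : Type*} [Ring A] [Algebra ℂ A]

theorem symm {φ : A → ℂ} {P Q : Subalgebra ℂ A} (hf : IsFreePair φ P Q) :
    IsFreePair φ Q P := by
  intro n a ι ha h0 halt hn
  refine hf n a (fun i => !ι i) (fun i => ?_) h0 (fun i h => by simpa using halt i h) hn
  cases hι : ι i <;> simpa [hι] using ha i

theorem map_prod_ofFn_eq_zero {φ : A → ℂ} {P Q : Subalgebra ℂ A} (hf : IsFreePair φ P Q)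
    {n : ℕ} (a : Fin n → A) (ha : ∀ i, a i ∈ if i.val % 2 = 0 then P else Q)
    (h0 : ∀ i, φ (a i) = 0) (hn : n ≠ 0) : φ (List.ofFn a).prod = 0 :=
  hf n a (fun i => decide (i.val % 2 = 0)) (by simpa using ha) h0
    (fun i h => by simp only [ne_eq, decide_eq_decide]; omega) hn

variable {φ : A →ₗ[ℂ] ℂ} {P Q : Subalgebra ℂ A} (hf : IsFreePair φ P Q)
include hf

theorem map_mul_eq_zero {a b : A} (ha : a ∈ P) (hb : b ∈ Q) (ha0 : φ a = 0)
    (hb0 : φ b = 0) : φ (a * b) = 0 := by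
  simpa [List.ofFn_succ] using hf.map_prod_ofFn_eq_zero ![a, b]
    (by intro i; fin_cases i <;> simpa) (by intro i; fin_cases i <;> simpa) (by norm_num)

theorem map_mul_mul_eq_zero {a b a' : A} (ha : a ∈ P) (hb : b ∈ Q) (ha' : a' ∈ P)
    (ha0 : φ a = 0) (hb0 : φ b = 0) (ha'0 : φ a' = 0) : φ (a * b * a') = 0 := by
  simpa [List.ofFn_succ, mul_assoc] using hf.map_prod_ofFn_eq_zero ![a, b, a']
    (by intro i; fin_cases i <;> simpa) (by intro i; fin_cases i <;> simpa) (by norm_num)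

theorem map_mul_mul_mul_eq_zero {a b a' b' : A} (ha : a ∈ P) (hb : b ∈ Q) (ha' : a' ∈ P)
    (hb' : b' ∈ Q) (ha0 : φ a = 0) (hb0 : φ b = 0) (ha'0 : φ a' = 0) (hb'0 : φ b' = 0) :
    φ (a * b * a' * b') = 0 := by
  simpa [List.ofFn_succ, mul_assoc] using hf.map_prod_ofFn_eq_zero ![a, b, a', b']
    (by intro i; fin_cases i <;> simpa) (by intro i; fin_cases i <;> simpa) (by norm_num)

theorem map_mul_eq_mul (hφ : φ 1 = 1) {a b : A} (ha : a ∈ P) (hb : b ∈ Q) :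
    φ (a * b) = φ a * φ b := by
  have hcen : ∀ {c : A} {R : Subalgebra ℂ A}, c ∈ R →
      c - φ c • 1 ∈ R ∧ φ (c - φ c • 1) = 0 := fun hc =>
    ⟨sub_mem hc (Subalgebra.smul_mem _ (one_mem _) _), by simp [hφ]⟩
  have h := hf.map_mul_eq_zero (hcen ha).1 (hcen hb).1 (hcen ha).2 (hcen hb).2
  simp only [sub_mul, mul_sub, smul_mul_assoc, mul_smul_comm, one_mul, mul_one,
    map_sub, map_smul, hφ, smul_eq_mul] at h
  linear_combination h

theorem map_mul_mul_mul_self (hφ : φ 1 = 1) {a b : A} (ha : a ∈ P) (hb : b ∈ Q) :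
    φ (a * b * a * b) = φ (a * a) * φ b ^ 2 + φ a ^ 2 * φ (b * b) - φ a ^ 2 * φ b ^ 2 := by
  set u := a - φ a • 1
  set v := b - φ b • 1
  have hu : u ∈ P := sub_mem ha (Subalgebra.smul_mem _ (one_mem _) _)
  have hv : v ∈ Q := sub_mem hb (Subalgebra.smul_mem _ (one_mem _) _)
  have hu0 : φ u = 0 := by simp [u, hφ]
  have hv0 : φ v = 0 := by simp [v, hφ]
  have huv : φ (u * v) = 0 := hf.map_mul_eq_zero hu hv hu0 hv0
  have hvu : φ (v * u) = 0 := hf.symm.map_mul_eq_zero hv hu hv0 hu0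
  have huvu : φ (u * v * u) = 0 := hf.map_mul_mul_eq_zero hu hv hu hu0 hv0 hu0
  have hvuv : φ (v * u * v) = 0 := hf.symm.map_mul_mul_eq_zero hv hu hv hv0 hu0 hv0
  have huvuv : φ (u * v * u * v) = 0 :=
    hf.map_mul_mul_mul_eq_zero hu hv hu hv hu0 hv0 hu0 hv0
  have huvv : φ (u * v * v) = 0 := by
    rw [mul_assoc, hf.map_mul_eq_mul hφ hu (mul_mem hv hv), hu0, zero_mul]
  have huuv : φ (u * u * v) = 0 := by
    rw [hf.map_mul_eq_mul hφ (mul_mem hu hu) hv, hv0, mul_zero]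
  have ha_eq : a = u + φ a • 1 := (sub_add_cancel _ _).symm
  have hb_eq : b = v + φ b • 1 := (sub_add_cancel _ _).symm
  clear_value u v
  generalize φ a = m at ha_eq ⊢
  generalize φ b = n at hb_eq ⊢
  subst ha_eq hb_eq
  simp only [mul_add, add_mul, smul_mul_assoc, mul_smul_comm, one_mul, mul_one, smul_add,
    map_add, map_smul, smul_eq_mul, hφ, hu0, hv0, huv, hvu, huvu, hvuv, huvuv, huvv, huuv]
  ring

end IsFreePair

namespace TNormSetup

variable {A : Type*} [NormedRing A] [StarRing A] [CStarRing A] [NormedAlgebra ℂ A]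
  {k : ℕ} {t : ℝ} (S : TNormSetup A k t)

theorem emb_add (x y : Fin k → ℝ) : S.emb (x + y) = S.emb x + S.emb y := by
  simp only [emb, Pi.add_apply, Complex.ofReal_add, add_smul, Finset.sum_add_distrib]

theorem emb_smul (c : ℝ) (x : Fin k → ℝ) : S.emb (c • x) = (c : ℂ) • S.emb x := by
  simp only [emb, Finset.smul_sum, Pi.smul_apply, smul_eq_mul, Complex.ofReal_mul, smul_smul]

theorem emb_mul_self (x : Fin k → ℝ) : S.emb x * S.emb x = S.emb (x * x) := by
  rw [emb, emb, Finset.sum_mul_sum]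
  refine Finset.sum_congr rfl fun i _ => ?_
  rw [Finset.sum_eq_single i]
  · rw [smul_mul_smul_comm, S.q_proj, Pi.mul_apply, Complex.ofReal_mul]
  · intro j _ hji
    rw [smul_mul_smul_comm, S.q_orth i j hji.symm, smul_zero]
  · simp

theorem emb_mem_adjoin (x : Fin k → ℝ) : S.emb x ∈ Algebra.adjoin ℂ (Set.range S.q) :=
  Subalgebra.sum_mem _ fun i _ =>
    Subalgebra.smul_mem _ (Algebra.subset_adjoin (Set.mem_range_self i)) _

theorem φ_emb (x : Fin k → ℝ) : S.φ (S.emb x) = ((∑ i, x i / k : ℝ) : ℂ) := by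
  simp [emb, S.q_trace, div_eq_mul_inv]

theorem φ_emb_mul_p_mul_emb_mul_p (x : Fin k → ℝ) :
    S.φ (S.emb x * S.p * S.emb x * S.p) =
      ((t ^ 2 * ∑ i, x i ^ 2 / k + (t - t ^ 2) * (∑ i, x i / k) ^ 2 : ℝ) : ℂ) := by
  have hfree := S.free.symm.map_mul_mul_mul_self S.unital (S.emb_mem_adjoin x)
    (Algebra.subset_adjoin rfl)
  rw [hfree, S.p_proj, S.p_trace, S.emb_mul_self, φ_emb, φ_emb]
  simp only [Pi.mul_apply, ← sq]
  push_cast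
  ring

end TNormSetup

section TNorm

variable {A : Type*} [NormedRing A] [StarRing A] [CStarRing A] [NormedAlgebra ℂ A]
  {k : ℕ} {t : ℝ} (S : TNormSetup A k t)

theorem tnorm_add_le (x y : Fin k → ℝ) : tnorm S (x + y) ≤ tnorm S x + tnorm S y := by
  simpa only [tnorm, S.emb_add, mul_add, add_mul] using norm_add_le _ _

theorem tnorm_smul (c : ℝ) (x : Fin k → ℝ) : tnorm S (c • x) = |c| * tnorm S x := by
  rw [tnorm, tnorm, S.emb_smul, mul_smul_comm, smul_mul_assoc, norm_smul, Complex.norm_real,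
    Real.norm_eq_abs]

theorem eq_zero_of_tnorm_eq_zero (ht : t ∈ Set.Ioc (0 : ℝ) 1) {x : Fin k → ℝ}
    (hx : tnorm S x = 0) : x = 0 := by
  have hpxp : S.p * S.emb x * S.p = 0 := norm_eq_zero.mp hx
  have hmoment : t ^ 2 * ∑ i, x i ^ 2 / k + (t - t ^ 2) * (∑ i, x i / k) ^ 2 = 0 := by
    have h := S.φ_emb_mul_p_mul_emb_mul_p x
    rw [show S.emb x * S.p * S.emb x * S.p = S.emb x * (S.p * S.emb x * S.p) by
      simp only [mul_assoc], hpxp, mul_zero, map_zero] at h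
    exact_mod_cast h.symm
  have hsq_nonneg : 0 ≤ ∑ i, x i ^ 2 / k := by positivity
  have hsq : ∑ i, x i ^ 2 / k = 0 := by
    have ht_sq : 0 ≤ t - t ^ 2 := by nlinarith [ht.1, ht.2]
    have : t ^ 2 * ∑ i, x i ^ 2 / k = 0 := by nlinarith [sq_nonneg (∑ i, x i / k)]
    simpa [ht.1.ne'] using this
  funext i
  have hk : (0 : ℝ) < k := by exact_mod_cast i.pos
  have := (Finset.sum_eq_zero_iff_of_nonneg fun j _ => by positivity).mp hsq i
    (Finset.mem_univ i)
  simpa [hk.ne'] using this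

end TNorm

/-- the map `x ↦ ‖pxp‖` is a norm on `ℝ^k`: homogeneous, satisfies the
triangle inequality, and definite. -/
theorem stmt_3 {A : Type*} [NormedRing A] [StarRing A] [CStarRing A] [NormedAlgebra ℂ A]
    {k : ℕ} {t : ℝ} (ht : t ∈ Set.Ioc (0 : ℝ) 1) (S : TNormSetup A k t) :
    (∀ x y : Fin k → ℝ, tnorm S (x + y) ≤ tnorm S x + tnorm S y) ∧
    (∀ (c : ℝ) (x : Fin k → ℝ), tnorm S (c • x) = |c| * tnorm S x) ∧
    (∀ x : Fin k → ℝ, tnorm S x = 0 → x = 0) :=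
  ⟨tnorm_add_le S, tnorm_smul S, fun _ => eq_zero_of_tnorm_eq_zero S ht⟩
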